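/- arXiv:1804.01899 — 2 statements merged into one kernel-verified Lean document; each statement's English description precedes it below -/
import Mathlib

section
/- With ψ_λ as above and N' := N/(N−1), the inequality |Dψ_λ(ξ)|^{N'} ≤ (1/α₀) Dψ_λ(ξ):ξ holds for every symmetric 2×2 matrix ξ. -/
open Matrix MeasureTheory Filter

noncomputable def frobInner (ξ ζ : Matrix (Fin 2) (Fin 2) ℝ) : ℝ :=
  ∑ i : Fin 2, ∑ j : Fin 2, ξ i j * ζ i j

noncomputable def frobNorm (ξ : Matrix (Fin 2) (Fin 2) ℝ) : ℝ :=
  Real.sqrt (frobInner ξ ξ)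

noncomputable def rInner (ξ ζ : Matrix (Fin 2) (Fin 2) ℝ) : ℝ :=
  frobInner ξ ζ - (1 / 3) * Matrix.trace ξ * Matrix.trace ζ

noncomputable def rNorm (ξ : Matrix (Fin 2) (Fin 2) ℝ) : ℝ :=
  Real.sqrt (frobInner ξ ξ - (1 / 3) * Matrix.trace ξ ^ 2)

noncomputable def starNorm (ξ : Matrix (Fin 2) (Fin 2) ℝ) : ℝ :=
  Real.sqrt (frobInner ξ ξ + Matrix.trace ξ ^ 2)

noncomputable def Dpsi (N : ℕ) (a l : ℝ) (ξ : Matrix (Fin 2) (Fin 2) ℝ) :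
    Matrix (Fin 2) (Fin 2) ℝ :=
  ((1 / a ^ (N - 1)) * min (rNorm ξ ^ (N - 2)) (l ^ (N - 2))) •
    (ξ - ((1 / 3 : ℝ) * Matrix.trace ξ) • (1 : Matrix (Fin 2) (Fin 2) ℝ))

/-!
Writing `Dψ_λ(ξ) = c • (ξ - (tr ξ / 3) I)` with `c ≥ 0`, one has `|Dψ_λ(ξ)| ≤ c r` and
`Dψ_λ(ξ) : ξ = c r²`, where `r = |ξ|_r`. Since `c ≤ r^{N-2} / α₀^{N-1}`, the number `x = c r`
satisfies `x ≤ (r/α₀)^{N-1}`, so `x^{N'} = x · x^{1/(N-1)} ≤ x · r/α₀ = c r² / α₀`.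
-/

theorem rpow_one_add_inv_le_mul {x y : ℝ} {n : ℕ} (hn : n ≠ 0) (hx : 0 ≤ x) (hy : 0 ≤ y)
    (hxy : x ≤ y ^ n) : x ^ (1 + (n : ℝ)⁻¹) ≤ x * y := by
  rw [Real.rpow_add' hx (by positivity), Real.rpow_one]
  gcongr
  calc x ^ (n : ℝ)⁻¹ ≤ (y ^ n) ^ (n : ℝ)⁻¹ := by gcongr
    _ = y := Real.pow_rpow_inv_natCast hy hn

theorem natCast_div_natCast_sub_one {N : ℕ} (hN : 2 ≤ N) :
    (N : ℝ) / ((N : ℝ) - 1) = 1 + ((N - 1 : ℕ) : ℝ)⁻¹ := by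
  have hN' : (1 : ℝ) < N := by exact_mod_cast hN
  have hpos : (N : ℝ) - 1 ≠ 0 := by linarith
  rw [Nat.cast_sub (by omega), Nat.cast_one]
  field_simp
  ring

noncomputable def dpsiCoeff (N : ℕ) (a l : ℝ) (ξ : Matrix (Fin 2) (Fin 2) ℝ) : ℝ :=
  (1 / a ^ (N - 1)) * min (rNorm ξ ^ (N - 2)) (l ^ (N - 2))

theorem rNorm_nonneg (ξ : Matrix (Fin 2) (Fin 2) ℝ) : 0 ≤ rNorm ξ := Real.sqrt_nonneg _

theorem rNorm_sq (ξ : Matrix (Fin 2) (Fin 2) ℝ) :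
    rNorm ξ ^ 2 = frobInner ξ ξ - (1 / 3) * Matrix.trace ξ ^ 2 := by
  refine Real.sq_sqrt ?_
  simp only [frobInner, Fin.sum_univ_two, Matrix.trace_fin_two]
  nlinarith [sq_nonneg (ξ 0 1), sq_nonneg (ξ 1 0), sq_nonneg (ξ 0 0 - ξ 1 1),
    sq_nonneg (ξ 0 0), sq_nonneg (ξ 1 1)]

theorem dpsiCoeff_nonneg (N : ℕ) {a l : ℝ} (ha : 0 < a) (hl : 0 < l)
    (ξ : Matrix (Fin 2) (Fin 2) ℝ) : 0 ≤ dpsiCoeff N a l ξ :=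
  mul_nonneg (by positivity) (le_min (pow_nonneg (rNorm_nonneg ξ) _) (pow_nonneg hl.le _))

theorem dpsiCoeff_mul_rNorm_le {N : ℕ} (hN : 2 ≤ N) {a : ℝ} (ha : 0 < a) (l : ℝ)
    (ξ : Matrix (Fin 2) (Fin 2) ℝ) :
    dpsiCoeff N a l ξ * rNorm ξ ≤ (rNorm ξ / a) ^ (N - 1) := by
  have hN1 : N - 1 = N - 2 + 1 := by omega
  calc dpsiCoeff N a l ξ * rNorm ξ ≤ (1 / a ^ (N - 1)) * rNorm ξ ^ (N - 2) * rNorm ξ := by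
        unfold dpsiCoeff
        gcongr
        · exact rNorm_nonneg ξ
        · exact min_le_left _ _
    _ = (rNorm ξ / a) ^ (N - 1) := by
        rw [div_pow, hN1, pow_succ]
        ring

theorem frobInner_Dpsi_eq (N : ℕ) (a l : ℝ) (ξ : Matrix (Fin 2) (Fin 2) ℝ) :
    frobInner (Dpsi N a l ξ) ξ = dpsiCoeff N a l ξ * rNorm ξ ^ 2 := by
  rw [rNorm_sq]
  simp only [Dpsi, dpsiCoeff, frobInner, Fin.sum_univ_two, Matrix.smul_apply, Matrix.sub_apply,
    Matrix.one_apply, Matrix.trace_fin_two, smul_eq_mul]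
  norm_num
  ring

theorem frobNorm_Dpsi_le (N : ℕ) {a l : ℝ} (ha : 0 < a) (hl : 0 < l)
    (ξ : Matrix (Fin 2) (Fin 2) ℝ) :
    frobNorm (Dpsi N a l ξ) ≤ dpsiCoeff N a l ξ * rNorm ξ := by
  have hc := dpsiCoeff_nonneg N ha hl ξ
  -- for 2×2 matrices `ξ - (tr ξ / 3) I` is not trace-free, which costs the term `(tr ξ)² / 9`
  have hdev : frobInner (Dpsi N a l ξ) (Dpsi N a l ξ) =
      dpsiCoeff N a l ξ ^ 2 * (rNorm ξ ^ 2 - (1 / 9) * Matrix.trace ξ ^ 2) := by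
    rw [rNorm_sq]
    simp only [Dpsi, dpsiCoeff, frobInner, Fin.sum_univ_two, Matrix.smul_apply,
      Matrix.sub_apply, Matrix.one_apply, Matrix.trace_fin_two, smul_eq_mul]
    norm_num
    ring
  rw [frobNorm, Real.sqrt_le_iff, hdev]
  refine ⟨mul_nonneg hc (rNorm_nonneg ξ), ?_⟩
  nlinarith [mul_nonneg (sq_nonneg (dpsiCoeff N a l ξ)) (sq_nonneg (Matrix.trace ξ))]

theorem stmt11_general (N : ℕ) (hN : 4 ≤ N) (a l : ℝ) (ha : 0 < a) (hl : 0 < l)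
    (ξ : Matrix (Fin 2) (Fin 2) ℝ) :
    frobNorm (Dpsi N a l ξ) ^ ((N : ℝ) / ((N : ℝ) - 1)) ≤
      (1 / a) * frobInner (Dpsi N a l ξ) ξ := by
  have hN2 : 2 ≤ N := by omega
  set c := dpsiCoeff N a l ξ
  set r := rNorm ξ
  have hcr : 0 ≤ c * r := mul_nonneg (dpsiCoeff_nonneg N ha hl ξ) (rNorm_nonneg ξ)
  rw [frobInner_Dpsi_eq, natCast_div_natCast_sub_one hN2]
  calc frobNorm (Dpsi N a l ξ) ^ (1 + ((N - 1 : ℕ) : ℝ)⁻¹)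
      ≤ (c * r) ^ (1 + ((N - 1 : ℕ) : ℝ)⁻¹) :=
        Real.rpow_le_rpow (Real.sqrt_nonneg _) (frobNorm_Dpsi_le N ha hl ξ) (by positivity)
    _ ≤ (c * r) * (r / a) :=
        rpow_one_add_inv_le_mul (by omega) hcr (div_nonneg (rNorm_nonneg ξ) ha.le)
          (dpsiCoeff_mul_rNorm_le hN2 ha l ξ)
    _ = 1 / a * (c * r ^ 2) := by ring

theorem stmt11 (N : ℕ) (hN : 4 ≤ N) (a l : ℝ) (ha : 0 < a) (hl : 0 < l)
    (ξ : Matrix (Fin 2) (Fin 2) ℝ) (hξ : ξ.IsSymm) :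
    frobNorm (Dpsi N a l ξ) ^ ((N : ℝ) / ((N : ℝ) - 1)) ≤
      (1 / a) * frobInner (Dpsi N a l ξ) ξ :=
  stmt11_general N hN a l ha hl ξ
end

section
/- The map Dψ_λ : M²ˣ²_sym → M²ˣ²_sym given by Dψ_λ(ξ) = (1/α₀^{N−1})(|ξ|_r^{N−2} ∧ λ^{N−2})(ξ − (1/3)(tr ξ)I) is injective, for any integer N ≥ 4, α₀ > 0, λ > 0. -/
open Matrix MeasureTheory Filter

/-- the deviatoric part -/
noncomputable def dev (ξ : Matrix (Fin 2) (Fin 2) ℝ) : Matrix (Fin 2) (Fin 2) ℝ :=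
  ξ - ((1 / 3 : ℝ) * Matrix.trace ξ) • (1 : Matrix (Fin 2) (Fin 2) ℝ)

lemma dev_recover (ξ : Matrix (Fin 2) (Fin 2) ℝ) :
    ξ = dev ξ + (Matrix.trace (dev ξ)) • (1 : Matrix (Fin 2) (Fin 2) ℝ) := by
  ext i j
  fin_cases i <;> fin_cases j <;>
    simp [dev, Matrix.trace, Matrix.diag, Fin.sum_univ_two, Matrix.one_apply,
      Matrix.sub_apply, Matrix.smul_apply, Matrix.add_apply] <;> ring

lemma rNorm_eq_starNorm_dev (ξ : Matrix (Fin 2) (Fin 2) ℝ) :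
    rNorm ξ = starNorm (dev ξ) := by
  unfold rNorm starNorm dev
  congr 1
  simp [frobInner, Matrix.trace, Matrix.diag, Fin.sum_univ_two, Matrix.one_apply,
    Matrix.sub_apply, Matrix.smul_apply]
  ring

lemma q_nonneg (ξ : Matrix (Fin 2) (Fin 2) ℝ) :
    0 ≤ frobInner ξ ξ + Matrix.trace ξ ^ 2 := by
  simp only [frobInner, Matrix.trace, Matrix.diag, Fin.sum_univ_two]
  nlinarith [sq_nonneg (ξ 0 0), sq_nonneg (ξ 0 1), sq_nonneg (ξ 1 0), sq_nonneg (ξ 1 1),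
    sq_nonneg (ξ 0 0 + ξ 1 1)]

lemma starNorm_pos {ξ : Matrix (Fin 2) (Fin 2) ℝ} (h : ξ ≠ 0) : 0 < starNorm ξ := by
  rw [starNorm, Real.sqrt_pos]
  rcases lt_or_eq_of_le (q_nonneg ξ) with h' | h'
  · exact h'
  · exfalso
    apply h
    ext i j
    have := h'.symm
    simp only [frobInner, Matrix.trace, Matrix.diag, Fin.sum_univ_two] at this
    fin_cases i <;> fin_cases j <;> simp <;>
      nlinarith [sq_nonneg (ξ 0 0), sq_nonneg (ξ 0 1), sq_nonneg (ξ 1 0), sq_nonneg (ξ 1 1),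
        sq_nonneg (ξ 0 0 + ξ 1 1)]

lemma starNorm_smul (c : ℝ) (ξ : Matrix (Fin 2) (Fin 2) ℝ) :
    starNorm (c • ξ) = |c| * starNorm ξ := by
  have h : frobInner (c • ξ) (c • ξ) + Matrix.trace (c • ξ) ^ 2
      = c ^ 2 * (frobInner ξ ξ + Matrix.trace ξ ^ 2) := by
    simp [frobInner, Matrix.trace, Matrix.diag, Fin.sum_univ_two, Matrix.smul_apply]
    ring
  rw [starNorm, h, Real.sqrt_mul (sq_nonneg c), Real.sqrt_sq_eq_abs, starNorm]

theorem stmt12 (N : ℕ) (hN : 4 ≤ N) (a l : ℝ) (ha : 0 < a) (hl : 0 < l) :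
    Set.InjOn (Dpsi N a l) {ξ : Matrix (Fin 2) (Fin 2) ℝ | ξ.IsSymm} := by
  intro ξ _ ζ _ h
  have hk : (0:ℝ) < 1 / a ^ (N - 1) := by positivity
  set k : ℝ := 1 / a ^ (N - 1) with hkdef
  -- rewrite Dpsi via dev
  have hD : ∀ χ : Matrix (Fin 2) (Fin 2) ℝ,
      Dpsi N a l χ = (k * min (starNorm (dev χ) ^ (N - 2)) (l ^ (N - 2))) • dev χ := by
    intro χ
    rw [Dpsi, ← rNorm_eq_starNorm_dev]
    rfl
  rw [hD, hD] at h
  set s := starNorm (dev ξ) with hs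
  set t := starNorm (dev ζ) with ht
  have hdev : dev ξ = dev ζ := by
    by_cases hξ0 : dev ξ = 0
    · by_cases hζ0 : dev ζ = 0
      · rw [hξ0, hζ0]
      · exfalso
        have ht0 : 0 < t := starNorm_pos hζ0
        have hm : 0 < k * min (t ^ (N - 2)) (l ^ (N - 2)) := by
          apply mul_pos hk
          exact lt_min (pow_pos ht0 _) (pow_pos hl _)
        rw [hξ0, smul_zero] at h
        exact hζ0 ((smul_eq_zero.mp h.symm).resolve_left (ne_of_gt hm))
    · by_cases hζ0 : dev ζ = 0
      · exfalso
        have hs0 : 0 < s := starNorm_pos hξ0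
        have hm : 0 < k * min (s ^ (N - 2)) (l ^ (N - 2)) := by
          apply mul_pos hk
          exact lt_min (pow_pos hs0 _) (pow_pos hl _)
        rw [hζ0, smul_zero] at h
        exact hξ0 ((smul_eq_zero.mp h).resolve_left (ne_of_gt hm))
      · -- both nonzero
        have hs0 : 0 < s := starNorm_pos hξ0
        have ht0 : 0 < t := starNorm_pos hζ0
        have hmono : ∀ u v : ℝ, 0 < u → u < v →
            min (u ^ (N - 2)) (l ^ (N - 2)) * u < min (v ^ (N - 2)) (l ^ (N - 2)) * v := by
          intro u v hu huv
          apply mul_lt_mul'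
          · exact min_le_min (pow_le_pow_left₀ hu.le huv.le _) le_rfl
          · exact huv
          · exact hu.le
          · exact lt_min (pow_pos (hu.trans huv) _) (pow_pos hl _)
        -- take norms
        have hn := congrArg starNorm h
        rw [starNorm_smul, starNorm_smul, ← hs, ← ht] at hn
        have hms : 0 ≤ k * min (s ^ (N - 2)) (l ^ (N - 2)) := by positivity
        have hmt : 0 ≤ k * min (t ^ (N - 2)) (l ^ (N - 2)) := by positivity
        rw [abs_of_nonneg hms, abs_of_nonneg hmt] at hn
        have hst : s = t := by
          rcases lt_trichotomy s t with hlt | heq | hgt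
          · exfalso
            have := hmono s t hs0 hlt
            nlinarith
          · exact heq
          · exfalso
            have := hmono t s ht0 hgt
            nlinarith
        rw [← hst] at h
        have hm : 0 < k * min (s ^ (N - 2)) (l ^ (N - 2)) := by
          apply mul_pos hk
          exact lt_min (pow_pos hs0 _) (pow_pos hl _)
        exact smul_right_injective _ (ne_of_gt hm) h
  calc ξ = dev ξ + (Matrix.trace (dev ξ)) • 1 := dev_recover ξ
    _ = dev ζ + (Matrix.trace (dev ζ)) • 1 := by rw [hdev]
    _ = ζ := (dev_recover ζ).symm
end
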